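/- The 21 quadratic forms in 21 variables x_0,...,x_20 listed in equation (3) and the 21 quadratic forms listed in equation (4) define mutually inverse birational self-maps of P^20; i.e., substituting the forms of (3) into those of (4) yields (x_0·T, ..., x_20·T) for a single nonzero cubic form T. -/

import Mathlib

open MvPolynomial

noncomputable section

/-- Coordinates `x₀, …, x₂₀` on `ℙ²⁰`. -/
abbrev y : Fin 21 → MvPolynomial (Fin 21) ℚ := X

/-- The 21 quadrics of equation (3), defining the Cremona map `ω : ℙ²⁰ ⇢ ℙ²⁰`. -/
def omegaP20 : Fin 21 → MvPolynomial (Fin 21) ℚ :=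
  ![y 10 * y 15 - y 9 * y 16 + y 6 * y 20,
    y 10 * y 14 - y 8 * y 16 + y 5 * y 20,
    y 9 * y 14 - y 8 * y 15 + y 4 * y 20,
    y 6 * y 14 - y 5 * y 15 + y 4 * y 16,
    y 11 * y 13 - y 16 * y 17 + y 15 * y 18 - y 14 * y 19 + y 12 * y 20,
    y 3 * y 13 - y 10 * y 17 + y 9 * y 18 - y 8 * y 19 + y 7 * y 20,
    y 10 * y 12 - y 2 * y 13 - y 7 * y 16 - y 6 * y 18 + y 5 * y 19,
    y 9 * y 12 - y 1 * y 13 - y 7 * y 15 - y 6 * y 17 + y 4 * y 19,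
    y 8 * y 12 - y 0 * y 13 - y 7 * y 14 - y 5 * y 17 + y 4 * y 18,
    y 10 * y 11 - y 3 * y 16 + y 2 * y 20,
    y 9 * y 11 - y 3 * y 15 + y 1 * y 20,
    y 8 * y 11 - y 3 * y 14 + y 0 * y 20,
    y 7 * y 11 - y 3 * y 12 + y 2 * y 17 - y 1 * y 18 + y 0 * y 19,
    y 6 * y 11 - y 2 * y 15 + y 1 * y 16,
    y 5 * y 11 - y 2 * y 14 + y 0 * y 16,
    y 4 * y 11 - y 1 * y 14 + y 0 * y 15,
    y 6 * y 8 - y 5 * y 9 + y 4 * y 10,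
    y 3 * y 6 - y 2 * y 9 + y 1 * y 10,
    y 3 * y 5 - y 2 * y 8 + y 0 * y 10,
    y 3 * y 4 - y 1 * y 8 + y 0 * y 9,
    y 2 * y 4 - y 1 * y 5 + y 0 * y 6]

/-- The 21 quadrics of equation (4), the claimed inverse `ω⁻¹`. -/
def omegaInvP20 : Fin 21 → MvPolynomial (Fin 21) ℚ :=
  ![-(y 15 * y 18) + y 14 * y 19 - y 11 * y 20,
    -(y 15 * y 17) + y 13 * y 19 - y 10 * y 20,
    -(y 14 * y 17) + y 13 * y 18 - y 9 * y 20,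
    -(y 11 * y 17) + y 10 * y 18 - y 9 * y 19,
    -(y 15 * y 16) + y 3 * y 19 - y 2 * y 20,
    -(y 14 * y 16) + y 3 * y 18 - y 1 * y 20,
    -(y 13 * y 16) + y 3 * y 17 - y 0 * y 20,
    -(y 12 * y 16) - y 8 * y 17 + y 7 * y 18 - y 6 * y 19 - y 5 * y 20,
    -(y 11 * y 16) + y 2 * y 18 - y 1 * y 19,
    -(y 10 * y 16) + y 2 * y 17 - y 0 * y 19,
    -(y 9 * y 16) + y 1 * y 17 - y 0 * y 18,
    -(y 11 * y 13) + y 10 * y 14 - y 9 * y 15,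
    -(y 3 * y 12) - y 8 * y 13 + y 7 * y 14 - y 6 * y 15 - y 4 * y 20,
    y 3 * y 5 + y 2 * y 6 - y 1 * y 7 + y 0 * y 8 - y 4 * y 16,
    -(y 3 * y 11) + y 2 * y 14 - y 1 * y 15,
    -(y 3 * y 10) + y 2 * y 13 - y 0 * y 15,
    -(y 3 * y 9) + y 1 * y 13 - y 0 * y 14,
    -(y 8 * y 10) + y 7 * y 11 - y 2 * y 12 + y 5 * y 15 - y 4 * y 19,
    -(y 8 * y 9) + y 6 * y 11 - y 1 * y 12 + y 5 * y 14 - y 4 * y 18,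
    -(y 7 * y 9) + y 6 * y 10 - y 0 * y 12 + y 5 * y 13 - y 4 * y 17,
    -(y 2 * y 9) + y 1 * y 10 - y 0 * y 11]

theorem MvPolynomial.isHomogeneous_X_mul_X {σ R : Type*} [CommSemiring R] (i j : σ) :
    (X i * X j : MvPolynomial σ R).IsHomogeneous 2 :=
  (isHomogeneous_X R i).mul (isHomogeneous_X R j)

theorem omegaP20_isHomogeneous (j : Fin 21) : (omegaP20 j).IsHomogeneous 2 := by
  fin_cases j <;> simp only [omegaP20] <;>
    repeat' first
      | apply IsHomogeneous.add
      | apply IsHomogeneous.sub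
      | apply isHomogeneous_X_mul_X

def omegaCubic : MvPolynomial (Fin 21) ℚ :=
  y 1 * omegaP20 1 - y 0 * omegaP20 0 - y 2 * omegaP20 2 + y 3 * omegaP20 3 - y 11 * omegaP20 16

theorem omegaCubic_isHomogeneous : omegaCubic.IsHomogeneous 3 := by
  have h (i j : Fin 21) : (y i * omegaP20 j).IsHomogeneous 3 :=
    (isHomogeneous_X ℚ i).mul (omegaP20_isHomogeneous j)
  exact ((((h 1 1).sub (h 0 0)).sub (h 2 2)).add (h 3 3)).sub (h 11 16)

theorem omegaCubic_ne_zero : omegaCubic ≠ 0 := by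
  intro h
  -- at this point only the monomial `-x₀x₁₀x₁₅` of `omegaCubic` survives
  have := congrArg (eval fun i => if i ∈ ({0, 10, 15} : Finset (Fin 21)) then (1 : ℚ) else 0) h
  simp [omegaCubic, omegaP20] at this

theorem aeval_omegaP20_omegaInvP20 (i : Fin 21) :
    aeval omegaP20 (omegaInvP20 i) = X i * omegaCubic := by
  fin_cases i <;>
    simp only [Fin.reduceFinMk, omegaInvP20, omegaP20, omegaCubic, y, Matrix.cons_val, map_add,
      map_sub, map_neg, map_mul, aeval_X] <;>
    ring

/-- The 21 quadrics of equation (3) and the 21 quadrics of equation (4) define mutually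
inverse birational self-maps of `ℙ²⁰`: substituting the forms of (3) into those of (4)
yields `(x₀·T, …, x₂₀·T)` for a single nonzero cubic form `T`. -/
theorem cremonaP20_inverse :
    ∃ T : MvPolynomial (Fin 21) ℚ, T ≠ 0 ∧ T.IsHomogeneous 3 ∧
      ∀ i : Fin 21, aeval omegaP20 (omegaInvP20 i) = X i * T :=
  ⟨omegaCubic, omegaCubic_ne_zero, omegaCubic_isHomogeneous, aeval_omegaP20_omegaInvP20⟩

end
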